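/- In a cons-free ATRS, for any basic starting term f s₁ ... s_n, any term t reachable by rewriting is B-safe where B = B_{f s⃗} is the set of data terms that are subterms of the starting term or of a right-hand side of a rule; in particular, every data term occurring (as a subterm) in such a reduction lies in B. -/

import Mathlib

/-! # Applicative term rewriting systems (ATRSs) -/

/-- Simple types over a countable set of sorts. -/
inductive Ty where
  | base : ℕ → Ty
  | arrow : Ty → Ty → Ty

/-- Type order: sorts have order 0, `σ ⇒ τ` has order `max (order σ + 1) (order τ)`. -/
def Ty.order : Ty → ℕ
  | .base _ => 0
  | .arrow σ τ => max (σ.order + 1) τ.order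

/-- Applicative terms over a set `α` of function symbols, with variables `ℕ`. -/
inductive Tm (α : Type) where
  | sym : α → Tm α
  | var : ℕ → Tm α
  | app : Tm α → Tm α → Tm α

mutual
  /-- Strict subterm: `t` is a strict subterm of `s₁ s₂` if it is a strict
  subterm of `s₁` or a subterm of `s₂` (heads of applications are not subterms). -/
  inductive StrSubtm {α : Type} : Tm α → Tm α → Prop where
    | left {t s u : Tm α} : StrSubtm t s → StrSubtm t (Tm.app s u)
    | right {t s u : Tm α} : Subtm t u → StrSubtm t (Tm.app s u)
  /-- Subterm: `t ⊴ s` iff `t = s` or `t` is a strict subterm of `s`. -/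
  inductive Subtm {α : Type} : Tm α → Tm α → Prop where
    | refl (s : Tm α) : Subtm s s
    | strict {t s : Tm α} : StrSubtm t s → Subtm t s
end

/-- A signature: which symbols are constructors, their types, and variable types. -/
structure Sig (α : Type) where
  Cons : α → Prop
  typeOf : α → Ty
  varTy : ℕ → Ty

/-- Typing judgement for applicative terms. -/
inductive HasTy {α : Type} (S : Sig α) : Tm α → Ty → Prop where
  | sym (f : α) : HasTy S (.sym f) (S.typeOf f)
  | var (x : ℕ) : HasTy S (.var x) (S.varTy x)
  | app {s t : Tm α} {σ τ : Ty} :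
      HasTy S s (.arrow σ τ) → HasTy S t σ → HasTy S (.app s t) τ

mutual
  /-- Patterns: a variable, or a constructor fully applied (to base type) to patterns. -/
  inductive Pat {α : Type} (S : Sig α) : Tm α → Prop where
    | var (x : ℕ) : Pat S (.var x)
    | cons {s : Tm α} : PatSpine S s → (∃ i, HasTy S s (.base i)) → Pat S s
  /-- A constructor applied to a (possibly incomplete) list of patterns. -/
  inductive PatSpine {α : Type} (S : Sig α) : Tm α → Prop where
    | head {f : α} : S.Cons f → PatSpine S (.sym f)
    | app {s t : Tm α} : PatSpine S s → Pat S t → PatSpine S (.app s t)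
end

/-- Ground terms: terms without variables. -/
def Tm.ground {α : Type} : Tm α → Prop
  | .sym _ => True
  | .var _ => False
  | .app s t => s.ground ∧ t.ground

/-- Data terms: ground patterns. -/
def IsData {α : Type} (S : Sig α) (s : Tm α) : Prop := Pat S s ∧ s.ground

/-- The set of variables of a term. -/
def Tm.vars {α : Type} : Tm α → Set ℕ
  | .sym _ => ∅
  | .var x => {x}
  | .app s t => s.vars ∪ t.vars

/-- Number of occurrences of variable `x` in a term. -/
def Tm.count {α : Type} (x : ℕ) : Tm α → ℕ
  | .sym _ => 0
  | .var y => if y = x then 1 else 0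
  | .app s t => Tm.count x s + Tm.count x t

/-- Applying a substitution to a term. -/
def subst {α : Type} (γ : ℕ → Tm α) : Tm α → Tm α
  | .sym f => .sym f
  | .var x => γ x
  | .app s t => .app (subst γ s) (subst γ t)

/-- A rewrite rule. -/
structure Rule (α : Type) where
  lhs : Tm α
  rhs : Tm α

/-- Left-hand side shape of a constructor rule:
a defined symbol applied to patterns. -/
inductive LhsSpine {α : Type} (S : Sig α) : Tm α → Prop where
  | head {f : α} : ¬ S.Cons f → LhsSpine S (.sym f)
  | app {s t : Tm α} : LhsSpine S s → Pat S t → LhsSpine S (.app s t)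

/-- The head symbol of a term, if any. -/
def Tm.headSym {α : Type} : Tm α → Option α
  | .sym f => some f
  | .var _ => none
  | .app s _ => s.headSym

/-- `t` has the form `c t₁ ⋯ t_m` with `c` a constructor. -/
def ConsHead {α : Type} (S : Sig α) (t : Tm α) : Prop :=
  ∃ f, t.headSym = some f ∧ S.Cons f

/-- A rule is cons-free if every constructor-headed subterm of the right-hand side
is a data term or a (strict) subterm of the left-hand side. -/
def ConsFreeRule {α : Type} (S : Sig α) (ρ : Rule α) : Prop :=
  ∀ t, Subtm t ρ.rhs → ConsHead S t → (IsData S t ∨ StrSubtm t ρ.lhs)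

/-- A left-linear cons-free constructor rule (with well-typed sides of equal type,
and variables of the right-hand side occurring on the left). -/
def GoodRule {α : Type} (S : Sig α) (ρ : Rule α) : Prop :=
  LhsSpine S ρ.lhs ∧
  (∀ x, Tm.count x ρ.lhs ≤ 1) ∧
  ρ.rhs.vars ⊆ ρ.lhs.vars ∧
  (∃ σ, HasTy S ρ.lhs σ ∧ HasTy S ρ.rhs σ) ∧
  ConsFreeRule S ρ

/-- One-step rewriting: closure of rule instances under application contexts. -/
inductive Rew {α : Type} (R : Set (Rule α)) : Tm α → Tm α → Prop where
  | root {ρ : Rule α} {γ : ℕ → Tm α} :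
      ρ ∈ R → Rew R (subst γ ρ.lhs) (subst γ ρ.rhs)
  | appL {s s' t : Tm α} : Rew R s s' → Rew R (.app s t) (.app s' t)
  | appR {s t t' : Tm α} : Rew R t t' → Rew R (.app s t) (.app s t')

/-- `s` is `B`-safe: every constructor-headed subterm of `s` lies in `B`. -/
def BSafe {α : Type} (S : Sig α) (B : Set (Tm α)) (s : Tm α) : Prop :=
  ∀ t, Subtm t s → ConsHead S t → t ∈ B

/-- `B` is a suitable set of data terms: it consists of data terms, is closed
under subterms, and contains all data subterms of right-hand sides of rules. -/
def GoodB {α : Type} (S : Sig α) (R : Set (Rule α)) (B : Set (Tm α)) : Prop :=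
  (∀ t ∈ B, IsData S t) ∧
  (∀ t ∈ B, ∀ u, Subtm u t → u ∈ B) ∧
  (∀ ρ ∈ R, ∀ t, Subtm t ρ.rhs → IsData S t → t ∈ B)

/-- Spine of a basic term: a defined symbol applied to data terms. -/
inductive BasicSpine {α : Type} (S : Sig α) : Tm α → Prop where
  | head {f : α} : ¬ S.Cons f → BasicSpine S (.sym f)
  | app {s t : Tm α} : BasicSpine S s → IsData S t → BasicSpine S (.app s t)

/-- Basic terms: a defined symbol applied to data terms, of base type. -/
def Basic {α : Type} (S : Sig α) (s : Tm α) : Prop :=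
  BasicSpine S s ∧ ∃ i, HasTy S s (.base i)

/-- The set `B_s`: data terms occurring in `s` or in a right-hand side of a rule. -/
def Bset {α : Type} (S : Sig α) (R : Set (Rule α)) (s : Tm α) : Set (Tm α) :=
  { t | IsData S t ∧ (Subtm t s ∨ ∃ ρ ∈ R, Subtm t ρ.rhs) }

/-! Along the reduction the term stays well typed and `B`-safe. At a root step `l γ → r γ`,
a constructor-headed subterm of `r γ` is either `v γ` for a constructor-headed `v ⊴ r`, which
cons-freeness makes a data term of `r` or an instance of a strict subterm of `l`, or it lies
inside some `γ x`, a strict subterm of `l γ`. The one remaining shape, `(γ x) (a₁ γ) ⋯ (aₙ γ)`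
with `n ≥ 1`, is excluded by typing: `γ x` would be a data term, of base type, hence not
applicable. Under an application `a b`, a constructor-headed `a` would make `a b` a data term,
and data terms do not reduce; an arrow-typed reduct `a'` is not constructor-headed for the same
typing reason, so `B`-safety passes through the context. -/

section

variable {α : Type} {S : Sig α} {R : Set (Rule α)} {B : Set (Tm α)}

theorem StrSubtm.trans_subtm : ∀ {c b a : Tm α}, StrSubtm b c → Subtm a b → StrSubtm a c
  | .app _ _, _, _, .left h, ha => .left (h.trans_subtm ha)
  | .app _ _, _, _, .right (.refl _), ha => .right ha
  | .app _ _, _, _, .right (.strict h), ha => .right (.strict (h.trans_subtm ha))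

theorem Subtm.trans {c b a : Tm α} : Subtm b c → Subtm a b → Subtm a c
  | .refl _, h => h
  | .strict h, h' => .strict (h.trans_subtm h')

theorem StrSubtm.subst_mono (γ : ℕ → Tm α) :
    ∀ {w u : Tm α}, StrSubtm u w → StrSubtm (subst γ u) (subst γ w)
  | .app _ _, _, .left h => .left (h.subst_mono γ)
  | .app _ _, _, .right (.refl _) => .right (.refl _)
  | .app _ _, _, .right (.strict h) => .right (.strict (h.subst_mono γ))

theorem Subtm.subst_mono (γ : ℕ → Tm α) {w u : Tm α} :
    Subtm u w → Subtm (subst γ u) (subst γ w)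
  | .refl _ => .refl _
  | .strict h => .strict (h.subst_mono γ)

theorem StrSubtm.vars_subset : ∀ {w v : Tm α}, StrSubtm v w → v.vars ⊆ w.vars
  | .app _ _, _, .left h => h.vars_subset.trans Set.subset_union_left
  | .app _ _, _, .right (.refl _) => Set.subset_union_right
  | .app _ _, _, .right (.strict h) => h.vars_subset.trans Set.subset_union_right

theorem Subtm.vars_subset {w v : Tm α} : Subtm v w → v.vars ⊆ w.vars
  | .refl _ => subset_rfl
  | .strict h => h.vars_subset

theorem StrSubtm.of_subst (γ : ℕ → Tm α) : ∀ {r u : Tm α}, StrSubtm u (subst γ r) →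
    (∃ v, StrSubtm v r ∧ u = subst γ v) ∨ ∃ x ∈ r.vars, Subtm u (γ x)
  | .var x, _, h => .inr ⟨x, rfl, .strict h⟩
  | .app _ _, _, .left h =>
    (h.of_subst γ).imp (fun ⟨v, hv, he⟩ => ⟨v, .left hv, he⟩)
      fun ⟨x, hx, hu⟩ => ⟨x, .inl hx, hu⟩
  | .app _ r₂, _, .right (.refl _) => .inl ⟨r₂, .right (.refl _), rfl⟩
  | .app _ _, _, .right (.strict h) =>
    (h.of_subst γ).imp (fun ⟨v, hv, he⟩ => ⟨v, .right (.strict hv), he⟩)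
      fun ⟨x, hx, hu⟩ => ⟨x, .inr hx, hu⟩

theorem Subtm.of_subst (γ : ℕ → Tm α) {r u : Tm α} : Subtm u (subst γ r) →
    (∃ v, Subtm v r ∧ u = subst γ v) ∨ ∃ x ∈ r.vars, Subtm u (γ x) := by
  intro h
  cases h with
  | refl => exact .inl ⟨r, .refl _, rfl⟩
  | strict h => exact (h.of_subst γ).imp (fun ⟨v, hv, he⟩ => ⟨v, .strict hv, he⟩) id

theorem subst_eq_self_of_ground (γ : ℕ → Tm α) : ∀ {t : Tm α}, t.ground → subst γ t = t
  | .sym _, _ => rfl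
  | .app _ _, h => by rw [subst, subst_eq_self_of_ground γ h.1, subst_eq_self_of_ground γ h.2]

def Tm.headVar : Tm α → Option ℕ
  | .sym _ => none
  | .var x => some x
  | .app s _ => s.headVar

theorem Tm.headSym_subst_cases (γ : ℕ → Tm α) : ∀ v : Tm α,
    (∃ f, v.headSym = some f ∧ (subst γ v).headSym = some f) ∨
      ∃ x, v.headVar = some x ∧ x ∈ v.vars ∧ (subst γ v).headSym = (γ x).headSym
  | .sym f => .inl ⟨f, rfl, rfl⟩
  | .var x => .inr ⟨x, rfl, rfl, rfl⟩
  | .app v _ => (headSym_subst_cases γ v).imp id fun ⟨x, h, hx, he⟩ => ⟨x, h, .inl hx, he⟩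

theorem PatSpine.consHead : ∀ {s : Tm α}, PatSpine S s → ConsHead S s
  | _, .head hc => ⟨_, rfl, hc⟩
  | _, .app hs _ => hs.consHead

theorem BasicSpine.not_consHead : ∀ {s : Tm α}, BasicSpine S s → ¬ ConsHead S s
  | _, .head hf, ⟨_, rfl, hc⟩ => hf hc
  | _, .app hs _, hc => hs.not_consHead hc

theorem LhsSpine.not_consHead_subst (γ : ℕ → Tm α) :
    ∀ {l : Tm α}, LhsSpine S l → ¬ ConsHead S (subst γ l)
  | _, .head hf, ⟨_, rfl, hc⟩ => hf hc
  | _, .app hl _, hc => hl.not_consHead_subst γ hc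

theorem IsData.patSpine {t : Tm α} : IsData S t → PatSpine S t
  | ⟨.cons hs _, _⟩ => hs

theorem IsData.consHead {t : Tm α} (h : IsData S t) : ConsHead S t := h.patSpine.consHead

theorem IsData.hasTy_base {t : Tm α} : IsData S t → ∃ i, HasTy S t (.base i)
  | ⟨.cons _ hb, _⟩ => hb

theorem PatSpine.isData_of_strSubtm : ∀ {t u : Tm α}, PatSpine S t → t.ground →
    StrSubtm u t → IsData S u
  | _, _, .app hs _, hg, .left h => hs.isData_of_strSubtm hg.1 h
  | _, _, .app _ hp, hg, .right (.refl _) => ⟨hp, hg.2⟩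
  | _, _, .app _ hp, hg, .right (.strict h) =>
    IsData.patSpine ⟨hp, hg.2⟩ |>.isData_of_strSubtm hg.2 h

theorem IsData.of_subtm {t u : Tm α} (h : IsData S t) : Subtm u t → IsData S u
  | .refl _ => h
  | .strict hu => h.patSpine.isData_of_strSubtm h.2 hu

theorem BasicSpine.isData_of_strSubtm : ∀ {s u : Tm α}, BasicSpine S s →
    StrSubtm u s → IsData S u
  | _, _, .app hs _, .left h => hs.isData_of_strSubtm h
  | _, _, .app _ hd, .right h => hd.of_subtm h

theorem HasTy.unique : ∀ {t : Tm α} {σ τ : Ty}, HasTy S t σ → HasTy S t τ → σ = τ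
  | _, _, _, .sym _, .sym _ => rfl
  | _, _, _, .var _, .var _ => rfl
  | _, _, _, .app h₁ _, .app h₂ _ => (Ty.arrow.inj (h₁.unique h₂)).2

theorem IsData.not_hasTy_arrow {t : Tm α} {σ τ : Ty} (h : IsData S t) :
    ¬ HasTy S t (.arrow σ τ) := fun harr =>
  let ⟨_, hb⟩ := h.hasTy_base
  Ty.noConfusion (harr.unique hb)

theorem HasTy.of_strSubtm : ∀ {t u : Tm α} {σ : Ty}, HasTy S t σ → StrSubtm u t →
    ∃ τ, HasTy S u τ
  | _, _, _, .app h _, .left hu => h.of_strSubtm hu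
  | _, _, _, .app _ h, .right (.refl _) => ⟨_, h⟩
  | _, _, _, .app _ h, .right (.strict hu) => h.of_strSubtm hu

theorem HasTy.of_subtm {t u : Tm α} {σ : Ty} (h : HasTy S t σ) :
    Subtm u t → ∃ τ, HasTy S u τ
  | .refl _ => ⟨σ, h⟩
  | .strict hu => h.of_strSubtm hu

theorem HasTy.subst_of_varTy {γ : ℕ → Tm α} {t : Tm α} {σ : Ty} (h : HasTy S t σ)
    (hγ : ∀ x ∈ t.vars, HasTy S (γ x) (S.varTy x)) : HasTy S (subst γ t) σ := by
  induction h with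
  | sym f => exact .sym f
  | var x => exact hγ x rfl
  | app _ _ ih₁ ih₂ =>
    exact .app (ih₁ fun x hx => hγ x (.inl hx)) (ih₂ fun x hx => hγ x (.inr hx))

theorem HasTy.arrow_of_headVar {γ : ℕ → Tm α} : ∀ {v : Tm α} {x : ℕ} {σ : Ty},
    v.headVar = some x → v ≠ .var x → HasTy S (subst γ v) σ →
    ∃ τ₁ τ₂, HasTy S (γ x) (.arrow τ₁ τ₂)
  | .var _, _, _, rfl, hne, _ => (hne rfl).elim
  | .app v _, x, _, hv, _, .app h _ => by
    by_cases hvx : v = .var x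
    · subst hvx
      exact ⟨_, _, h⟩
    · exact HasTy.arrow_of_headVar (v := v) hv hvx h

mutual
theorem Pat.hasTy_varTy_of_subst {γ : ℕ → Tm α} {p : Tm α} {σ : Ty}
    (hp : Pat S p) (h : HasTy S p σ) (hγ : HasTy S (subst γ p) σ) :
    ∀ x ∈ p.vars, HasTy S (γ x) (S.varTy x) := by
  cases hp with
  | var y =>
    rintro x rfl
    cases h
    exact hγ
  | cons hs _ => exact (hs.hasTy_varTy_of_subst h hγ).2

theorem PatSpine.hasTy_varTy_of_subst {γ : ℕ → Tm α} {p : Tm α} {σ τ : Ty}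
    (hp : PatSpine S p) (h : HasTy S p σ) (hγ : HasTy S (subst γ p) τ) :
    σ = τ ∧ ∀ x ∈ p.vars, HasTy S (γ x) (S.varTy x) := by
  cases hp with
  | head _ =>
    cases h; cases hγ
    exact ⟨rfl, fun _ hx => hx.elim⟩
  | app hs hp =>
    cases h with | app h₁ h₂ =>
    cases hγ with | app hγ₁ hγ₂ =>
    obtain ⟨heq, hvars⟩ := hs.hasTy_varTy_of_subst h₁ hγ₁
    cases heq
    exact ⟨rfl, fun x hx => hx.elim (hvars x) (hp.hasTy_varTy_of_subst h₂ hγ₂ x)⟩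
end

theorem LhsSpine.hasTy_varTy_of_subst {γ : ℕ → Tm α} {l : Tm α} {σ τ : Ty}
    (hl : LhsSpine S l) (h : HasTy S l σ) (hγ : HasTy S (subst γ l) τ) :
    σ = τ ∧ ∀ x ∈ l.vars, HasTy S (γ x) (S.varTy x) := by
  cases hl with
  | head _ =>
    cases h; cases hγ
    exact ⟨rfl, fun _ hx => hx.elim⟩
  | app hl hp =>
    cases h with | app h₁ h₂ =>
    cases hγ with | app hγ₁ hγ₂ =>
    obtain ⟨heq, hvars⟩ := hl.hasTy_varTy_of_subst h₁ hγ₁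
    cases heq
    exact ⟨rfl, fun x hx => hx.elim (hvars x) (hp.hasTy_varTy_of_subst h₂ hγ₂ x)⟩

mutual
theorem Pat.subtm_subst_of_mem_vars (γ : ℕ → Tm α) {p : Tm α} {x : ℕ} :
    Pat S p → x ∈ p.vars → Subtm (γ x) (subst γ p)
  | .var _, rfl => .refl _
  | .cons hs _, hx => .strict (hs.strSubtm_subst_of_mem_vars γ hx)

theorem PatSpine.strSubtm_subst_of_mem_vars (γ : ℕ → Tm α) {p : Tm α} {x : ℕ} :
    PatSpine S p → x ∈ p.vars → StrSubtm (γ x) (subst γ p)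
  | .app hs _, .inl hx => .left (hs.strSubtm_subst_of_mem_vars γ hx)
  | .app _ hp, .inr hx => .right (hp.subtm_subst_of_mem_vars γ hx)
end

theorem LhsSpine.strSubtm_subst_of_mem_vars (γ : ℕ → Tm α) {l : Tm α} {x : ℕ} :
    LhsSpine S l → x ∈ l.vars → StrSubtm (γ x) (subst γ l)
  | .app hl _, .inl hx => .left (hl.strSubtm_subst_of_mem_vars γ hx)
  | .app _ hp, .inr hx => .right (hp.subtm_subst_of_mem_vars γ hx)

theorem GoodRule.hasTy_subst_rhs {ρ : Rule α} {γ : ℕ → Tm α} {σ : Ty} (hρ : GoodRule S ρ)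
    (h : HasTy S (subst γ ρ.lhs) σ) : HasTy S (subst γ ρ.rhs) σ := by
  obtain ⟨hl, _, hvars, ⟨σ₀, hlty, hrty⟩, _⟩ := hρ
  obtain ⟨rfl, hγ⟩ := hl.hasTy_varTy_of_subst hlty h
  exact hrty.subst_of_varTy fun x hx => hγ x (hvars hx)

theorem Rew.hasTy (hR : ∀ ρ ∈ R, GoodRule S ρ) {t t' : Tm α} {σ : Ty}
    (h : Rew R t t') (ht : HasTy S t σ) : HasTy S t' σ := by
  induction h generalizing σ with
  | root hρ => exact (hR _ hρ).hasTy_subst_rhs ht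
  | appL _ ih => cases ht with | app h₁ h₂ => exact .app (ih h₁) h₂
  | appR _ ih => cases ht with | app h₁ h₂ => exact .app h₁ (ih h₂)

theorem PatSpine.not_rew (hR : ∀ ρ ∈ R, LhsSpine S ρ.lhs) {t t' : Tm α}
    (ht : PatSpine S t) (hg : t.ground) (h : Rew R t t') : False := by
  induction h with
  | root hρ => exact (hR _ hρ).not_consHead_subst _ ht.consHead
  | appL _ ih => cases ht with | app hs _ => exact ih hs hg.1
  | appR _ ih => cases ht with | app _ hp => exact ih (IsData.patSpine ⟨hp, hg.2⟩) hg.2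

theorem bsafe_app_iff {a b : Tm α} (ha : ¬ ConsHead S a) :
    BSafe S B (.app a b) ↔ BSafe S B a ∧ BSafe S B b := by
  constructor
  · intro h
    refine ⟨fun u hu hcu => ?_, fun u hu => h u (.strict (.right hu))⟩
    cases hu with
    | refl => exact (ha hcu).elim
    | strict hu => exact h u (.strict (.left hu)) hcu
  · rintro ⟨hsa, hsb⟩ u hu hcu
    cases hu with
    | refl => exact (ha hcu).elim
    | strict hu =>
      cases hu with
      | left hu => exact hsa u (.strict hu) hcu
      | right hu => exact hsb u hu hcu

theorem BSafe.not_consHead_of_rew (hB : ∀ t ∈ B, IsData S t) (hR : ∀ ρ ∈ R, LhsSpine S ρ.lhs)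
    {t t' : Tm α} (ht : BSafe S B t) (h : Rew R t t') : ¬ ConsHead S t := fun hc =>
  have hd := hB t (ht t (.refl t) hc)
  hd.patSpine.not_rew hR hd.2 h

theorem BSafe.not_consHead_of_hasTy_arrow (hB : ∀ t ∈ B, IsData S t) {t : Tm α} {σ τ : Ty}
    (ht : BSafe S B t) (hty : HasTy S t (.arrow σ τ)) : ¬ ConsHead S t := fun hc =>
  (hB t (ht t (.refl t) hc)).not_hasTy_arrow hty

theorem GoodRule.bsafe_subst_rhs (hB : ∀ t ∈ B, IsData S t) {ρ : Rule α} (hρ : GoodRule S ρ)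
    (hBrhs : ∀ v, Subtm v ρ.rhs → IsData S v → v ∈ B) {γ : ℕ → Tm α} {σ : Ty}
    (hty : HasTy S (subst γ ρ.lhs) σ) (hsafe : BSafe S B (subst γ ρ.lhs)) :
    BSafe S B (subst γ ρ.rhs) := by
  have htyr := hρ.hasTy_subst_rhs hty
  obtain ⟨hl, _, hvars, _, hcf⟩ := hρ
  have hγ : ∀ x ∈ ρ.rhs.vars, StrSubtm (γ x) (subst γ ρ.lhs) := fun x hx =>
    hl.strSubtm_subst_of_mem_vars γ (hvars hx)
  intro u hu hcu
  rcases hu.of_subst γ with ⟨v, hv, rfl⟩ | ⟨x, hx, hux⟩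
  · rcases v.headSym_subst_cases γ with ⟨f, hf, hfγ⟩ | ⟨x, hxv, hx, hxγ⟩
    · obtain ⟨c, hc, hcc⟩ := hcu
      obtain rfl : f = c := Option.some.inj (hfγ.symm.trans hc)
      rcases hcf v hv ⟨f, hf, hcc⟩ with hd | hvl
      · rw [subst_eq_self_of_ground γ hd.2]
        exact hBrhs v hv hd
      · exact hsafe _ (.strict (hvl.subst_mono γ)) ⟨f, hfγ, hcc⟩
    · have hγx : γ x ∈ B :=
        hsafe _ (.strict (hγ x (hv.vars_subset hx))) (by rwa [ConsHead, ← hxγ])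
      by_cases hvx : v = .var x
      · subst hvx
        exact hγx
      · -- `v = x a₁ ⋯ aₙ` with `n ≥ 1` would apply the data term `γ x`
        obtain ⟨_, htyv⟩ := htyr.of_subtm (hv.subst_mono γ)
        obtain ⟨_, _, harr⟩ := HasTy.arrow_of_headVar hxv hvx htyv
        exact ((hB _ hγx).not_hasTy_arrow harr).elim
  · exact hsafe u ((Subtm.strict (hγ x hx)).trans hux) hcu

theorem Rew.bsafe (hB : ∀ t ∈ B, IsData S t) (hR : ∀ ρ ∈ R, GoodRule S ρ)
    (hBrhs : ∀ ρ ∈ R, ∀ v, Subtm v ρ.rhs → IsData S v → v ∈ B) {t t' : Tm α} {σ : Ty}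
    (h : Rew R t t') (hty : HasTy S t σ) (hsafe : BSafe S B t) : BSafe S B t' := by
  have hlhs : ∀ ρ ∈ R, LhsSpine S ρ.lhs := fun ρ hρ => (hR ρ hρ).1
  induction h generalizing σ with
  | root hρ => exact (hR _ hρ).bsafe_subst_rhs hB (hBrhs _ hρ) hty hsafe
  | @appL a _ _ hstep ih =>
    cases hty with | app hty₁ _ =>
    have ha : ¬ ConsHead S a := hsafe.not_consHead_of_rew hB hlhs (.appL hstep)
    rw [bsafe_app_iff ha] at hsafe
    have ha' := ih hty₁ hsafe.1
    rw [bsafe_app_iff (ha'.not_consHead_of_hasTy_arrow hB (hstep.hasTy hR hty₁))]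
    exact ⟨ha', hsafe.2⟩
  | @appR a _ _ hstep ih =>
    cases hty with | app _ hty₂ =>
    have ha : ¬ ConsHead S a := hsafe.not_consHead_of_rew hB hlhs (.appR hstep)
    rw [bsafe_app_iff ha] at hsafe ⊢
    exact ⟨hsafe.1, ih hty₂ hsafe.2⟩

theorem BasicSpine.bsafe_bset {s : Tm α} (hs : BasicSpine S s) :
    BSafe S (Bset S R s) s := by
  intro u hu hcu
  cases hu with
  | refl => exact (hs.not_consHead hcu).elim
  | strict hu => exact ⟨hs.isData_of_strSubtm hu, .inl (.strict hu)⟩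

end

/-- Starting from a basic term `s`, every term reachable by rewriting is
`B_s`-safe, where `B_s` consists of the data terms occurring in `s` or in a
right-hand side of a rule; in particular every data subterm of a reachable term
lies in `B_s`. -/
theorem reachable_bsafe {α : Type} (S : Sig α) (R : Set (Rule α))
    (hR : ∀ ρ ∈ R, GoodRule S ρ)
    (s t : Tm α) (hs : Basic S s) (hst : Relation.ReflTransGen (Rew R) s t) :
    BSafe S (Bset S R s) t ∧
    ∀ u, Subtm u t → IsData S u → u ∈ Bset S R s := by
  obtain ⟨hbasic, i, hsty⟩ := hs
  have hB : ∀ u ∈ Bset S R s, IsData S u := fun u hu => hu.1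
  have hBrhs : ∀ ρ ∈ R, ∀ v, Subtm v ρ.rhs → IsData S v → v ∈ Bset S R s :=
    fun ρ hρ v hv hd => ⟨hd, .inr ⟨ρ, hρ, hv⟩⟩
  have hinv : HasTy S t (.base i) ∧ BSafe S (Bset S R s) t := by
    induction hst with
    | refl => exact ⟨hsty, hbasic.bsafe_bset⟩
    | tail _ hstep ih => exact ⟨hstep.hasTy hR ih.1, hstep.bsafe hB hR hBrhs ih.1 ih.2⟩
  exact ⟨hinv.2, fun u hu hd => hinv.2 u hu hd.consHead⟩
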